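/- (Sharpness building block.) For N, C_N ∈ ℕ₊ let β_N(x) = Σ_{k=0}^{C_N} N^{−1/2} 1_{[2k/√N, (2k+1)/√N]}(x). Then for every family of sorted particles X^N = (x₀,…,x_N) with associated piecewise constant density ρ̄^N (with ∫ρ̄^N between consecutive particles equal to 1/N), one has ‖ρ̄^N − β_N‖_{L¹([0,(2C_N+1)/√N])} ≥ C_N/(4N). -/

import Mathlib

open MeasureTheory

/-- Piecewise constant density associated to sorted particles. -/
noncomputable def pcDensity (N : ℕ) (x : Fin (N + 1) → ℝ) : ℝ → ℝ :=
  fun y => ∑ i : Fin N, Set.indicator (Set.Ioo (x i.castSucc) (x i.succ))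
    (fun _ => 1 / (N * (x i.succ - x i.castSucc))) y

/-!
Cover `[0, (2C + 1)/√N]` by the `C` disjoint windows `((2k + 1/2)/√N, (2k + 5/2)/√N)`, each made
of the `k`-th gap `((2k + 1)/√N, (2k + 2)/√N)` of `β_N` and the halves of the two bumps next to
it. On each window `|ρ̄ - β_N| ≥ 1/(2√N)` on an interval of length `1/(2√N)`, which gives
`1/(4N)` per window. Indeed, either `ρ̄ ≥ 1/(2√N)` on the gap, or `ρ̄ < 1/(2√N)` at some point
of it: that point lies in a particle cell (or outside all particles), and a cell with density
`1/(N d) < 1/(2√N)` has length `d > 2/√N`, so it covers one of the half-bumps, where `β_N = 1/√N`.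
-/

open Set

lemma pcDensity_eq_of_mem_Ioo {N : ℕ} {x : Fin (N + 1) → ℝ} (hx : Monotone x) {i : Fin N}
    {z : ℝ} (hz : z ∈ Ioo (x i.castSucc) (x i.succ)) :
    pcDensity N x z = 1 / (N * (x i.succ - x i.castSucc)) := by
  unfold pcDensity
  rw [Finset.sum_eq_single_of_mem i (Finset.mem_univ i), indicator_of_mem hz]
  intro j _ hji
  refine indicator_of_notMem (fun hj => ?_) _
  rcases lt_or_gt_of_ne hji with h | h
  · linarith [hj.2, hz.1, hx (Fin.succ_le_castSucc_iff.2 h)]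
  · linarith [hj.1, hz.2, hx (Fin.succ_le_castSucc_iff.2 h)]

lemma pcDensity_eq_zero_of_notMem_Ioo {N : ℕ} {x : Fin (N + 1) → ℝ} (hx : Monotone x) {z : ℝ}
    (hz : z ∉ Ioo (x 0) (x (Fin.last N))) : pcDensity N x z = 0 :=
  Finset.sum_eq_zero fun _ _ => indicator_of_notMem (fun hj =>
    hz ⟨(hx (Fin.zero_le _)).trans_lt hj.1, hj.2.trans_le (hx (Fin.le_last _))⟩) _

lemma integrable_pcDensity (N : ℕ) (x : Fin (N + 1) → ℝ) : Integrable (pcDensity N x) :=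
  integrable_finsetSum _ fun _ _ =>
    (integrable_indicator_iff measurableSet_Ioo).2 (integrableOn_const measure_Ioo_lt_top.ne)

lemma exists_mem_Ioo_of_notMem_range {N : ℕ} {x : Fin (N + 1) → ℝ} {y : ℝ}
    (hy : y ∈ Ioo (x 0) (x (Fin.last N))) (hyx : y ∉ range x) :
    ∃ i : Fin N, y ∈ Ioo (x i.castSucc) (x i.succ) := by
  classical
  let S := Finset.univ.filter fun j => y < x j
  have hS : S.Nonempty := ⟨Fin.last N, by simpa [S] using hy.2⟩
  have hmin : y < x (S.min' hS) := (Finset.mem_filter.1 (S.min'_mem hS)).2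
  obtain ⟨i, hi⟩ : ∃ i : Fin N, i.succ = S.min' hS :=
    Fin.exists_succ_eq.2 fun h => by rw [h] at hmin; exact hmin.not_gt hy.1
  have hle : x i.castSucc ≤ y := by
    by_contra! hlt
    have := S.min'_le _ (Finset.mem_filter.2 ⟨Finset.mem_univ _, hlt⟩)
    exact Fin.castSucc_lt_succ.not_ge (hi ▸ this)
  exact ⟨i, lt_of_le_of_ne hle fun h => hyx ⟨_, h⟩, hi ▸ hmin⟩

lemma exists_Ioo_pcDensity_lt {N : ℕ} (hN : 0 < N) {x : Fin (N + 1) → ℝ} (hx : Monotone x)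
    {c y : ℝ} (hc : 0 < c) (hyx : y ∉ range x) (hρ : pcDensity N x y < c) :
    ∃ l r, y ∈ Ioo l r ∧ 1 / (N * c) ≤ r - l ∧ ∀ z ∈ Ioo l r, pcDensity N x z < c := by
  have hN : (0 : ℝ) < N := by exact_mod_cast hN
  by_cases hy : y ∈ Ioo (x 0) (x (Fin.last N))
  · obtain ⟨i, hi⟩ := exists_mem_Ioo_of_notMem_range hy hyx
    refine ⟨_, _, hi, ?_, fun z hz => ?_⟩
    · have hd : 0 < x i.succ - x i.castSucc := by linarith [hi.1, hi.2]
      rw [pcDensity_eq_of_mem_Ioo hx hi, div_lt_iff₀ (by positivity)] at hρ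
      rw [div_le_iff₀ (by positivity)]
      linarith
    · rwa [pcDensity_eq_of_mem_Ioo hx hz, ← pcDensity_eq_of_mem_Ioo hx hi]
  have hvanish : ∀ z ∉ Ioo (x 0) (x (Fin.last N)), pcDensity N x z < c := fun z hz => by
    rwa [pcDensity_eq_zero_of_notMem_Ioo hx hz]
  rcases not_and_or.1 hy with h0 | hlast
  · have h0 : y < x 0 := lt_of_le_of_ne (not_lt.1 h0) fun h => hyx ⟨0, h.symm⟩
    refine ⟨y - 1 / (N * c), x 0, ⟨sub_lt_self _ (by positivity), h0⟩, by linarith,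
      fun z hz => hvanish z fun h => ?_⟩
    linarith [hz.2, h.1]
  · have hlast : x (Fin.last N) < y := lt_of_le_of_ne (not_lt.1 hlast) fun h => hyx ⟨_, h⟩
    refine ⟨x (Fin.last N), y + 1 / (N * c), ⟨hlast, lt_add_of_pos_right _ (by positivity)⟩,
      by linarith, fun z hz => hvanish z fun h => ?_⟩
    linarith [hz.1, h.2]

/-- Either `ρ ≥ h / 2` on the first half of the gap `(a, a + h)` of `β`, or some point there has
`ρ < h / 2`; then `ρ < h / 2` on an interval of length `2 h` around it, which covers one of the
two half-bumps next to the gap, where `β = h`. -/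
lemma exists_Ioo_half_le_abs_sub {ρ β : ℝ → ℝ} {S : Set ℝ} {a h : ℝ} (hh : 0 < h)
    (hρ : ∀ y ∉ S, ρ y < h / 2 →
      ∃ l r, y ∈ Ioo l r ∧ 2 * h ≤ r - l ∧ ∀ z ∈ Ioo l r, ρ z < h / 2)
    (hgap : ∀ z ∈ Ioo a (a + h), β z = 0)
    (hleft : ∀ z ∈ Ioo (a - h / 2) a, β z = h)
    (hright : ∀ z ∈ Ioo (a + h) (a + h + h / 2), β z = h) :
    ∃ u ∈ Icc (a - h / 2) (a + h), ∀ z ∈ Ioo u (u + h / 2), z ∉ S → h / 2 ≤ |ρ z - β z| := by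
  by_cases hlarge : ∀ z ∈ Ioo a (a + h / 2), z ∉ S → h / 2 ≤ ρ z
  · refine ⟨a, ⟨by linarith, by linarith⟩, fun z hz hzS => ?_⟩
    rw [hgap z ⟨hz.1, by linarith [hz.2]⟩, sub_zero]
    exact (hlarge z hz hzS).trans (le_abs_self _)
  push Not at hlarge
  obtain ⟨y, hy, hyS, hρy⟩ := hlarge
  obtain ⟨l, r, hlr, hlen, hsmall⟩ := hρ y hyS hρy
  have hbump : ∀ z ∈ Ioo l r, β z = h → h / 2 ≤ |ρ z - β z| := fun z hz hβ => by
    rw [hβ, abs_sub_comm]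
    linarith [hsmall z hz, le_abs_self (h - ρ z)]
  by_cases hl : l ≤ a - h / 2
  · refine ⟨a - h / 2, ⟨le_rfl, by linarith⟩, fun z hz _ => hbump z ?_ (hleft z ?_)⟩
    · exact ⟨by linarith [hz.1], by linarith [hz.2, hy.1, hlr.2]⟩
    · exact ⟨hz.1, by linarith [hz.2]⟩
  · refine ⟨a + h, ⟨by linarith, le_rfl⟩, fun z hz _ => hbump z ?_ (hright z hz)⟩
    exact ⟨by linarith [hz.1, hy.2, hlr.1], by linarith [hz.2]⟩

lemma mul_sub_le_setIntegral_Ioo {f : ℝ → ℝ} {S : Set ℝ} (hS : S.Countable) {c u v : ℝ}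
    (huv : u ≤ v) (hf : IntegrableOn f (Ioo u v)) (hc : ∀ z ∈ Ioo u v, z ∉ S → c ≤ f z) :
    c * (v - u) ≤ ∫ z in Ioo u v, f z := by
  have hae : (fun _ => c) ≤ᵐ[volume.restrict (Ioo u v)] f := by
    rw [Filter.EventuallyLE, ae_restrict_iff' measurableSet_Ioo]
    filter_upwards [hS.ae_notMem volume] with z hzS hz using hc z hz hzS
  calc c * (v - u) = ∫ _ in Ioo u v, c := by
        rw [setIntegral_const, Real.volume_real_Ioo_of_le huv, smul_eq_mul, mul_comm]
    _ ≤ ∫ z in Ioo u v, f z :=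
        setIntegral_mono_ae_restrict (integrableOn_const measure_Ioo_lt_top.ne) hf hae

/-- `comb (√N) C` is the comb `β_N`. -/
noncomputable def comb (s : ℝ) (C : ℕ) (y : ℝ) : ℝ :=
  ∑ k ∈ Finset.range (C + 1),
    (Icc (2 * (k : ℝ) / s) ((2 * (k : ℝ) + 1) / s)).indicator (fun _ => s⁻¹) y

section comb

variable {s : ℝ} {C : ℕ} {y : ℝ}

lemma comb_eq_inv_of_mem (hs : 0 < s) {j : ℕ} (hj : j ≤ C)
    (hy : y ∈ Icc (2 * j * s⁻¹) ((2 * j + 1) * s⁻¹)) : comb s C y = s⁻¹ := by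
  unfold comb
  simp only [div_eq_mul_inv]
  rw [Finset.sum_eq_single_of_mem j (Finset.mem_range.2 (Nat.lt_succ_of_le hj)),
    indicator_of_mem hy]
  intro k _ hkj
  refine indicator_of_notMem (fun hk => hkj ?_) _
  rw [mem_Icc, ← div_eq_mul_inv, ← div_eq_mul_inv, div_le_iff₀ hs, le_div_iff₀ hs] at hy hk
  have hkj : (k : ℝ) < j + 1 := by linarith
  have hjk : (j : ℝ) < k + 1 := by linarith
  norm_cast at hkj hjk
  omega

lemma comb_eq_zero_of_mem_Ioo (hs : 0 < s) {k : ℕ}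
    (hy : y ∈ Ioo ((2 * k + 1) * s⁻¹) ((2 * k + 2) * s⁻¹)) : comb s C y = 0 := by
  refine Finset.sum_eq_zero fun j _ => indicator_of_notMem (fun hj => ?_) _
  rw [mem_Icc, div_le_iff₀ hs, le_div_iff₀ hs] at hj
  rw [mem_Ioo, ← div_eq_mul_inv, ← div_eq_mul_inv, div_lt_iff₀ hs, lt_div_iff₀ hs] at hy
  have hjk : (j : ℝ) < k + 1 := by linarith
  have hkj : (k : ℝ) < j := by linarith
  norm_cast at hkj hjk
  omega

lemma integrable_comb : Integrable (comb s C) :=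
  integrable_finsetSum _ fun _ _ =>
    (integrable_indicator_iff measurableSet_Icc).2 (integrableOn_const measure_Icc_lt_top.ne)

end comb

lemma one_div_four_mul_le_integral_window {N C k : ℕ} (hN : 0 < N) {x : Fin (N + 1) → ℝ}
    (hx : Monotone x) (hk : k < C) :
    1 / (4 * N) ≤ ∫ y in (2 * k + 1 / 2) * (√N)⁻¹..(2 * ((k + 1 : ℕ) : ℝ) + 1 / 2) * (√N)⁻¹,
      |pcDensity N x y - comb √N C y| := by
  have hs : 0 < √(N : ℝ) := Real.sqrt_pos.2 (by exact_mod_cast hN)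
  have hNh : (N : ℝ) * ((√N)⁻¹) ^ 2 = 1 := by
    rw [inv_pow, Real.sq_sqrt (Nat.cast_nonneg N), mul_inv_cancel₀ (by positivity)]
  set h := (√(N : ℝ))⁻¹
  have hh : 0 < h := inv_pos.2 hs
  set f := fun y => |pcDensity N x y - comb √N C y|
  have hf : Integrable f := ((integrable_pcDensity N x).sub integrable_comb).abs
  have hρ : ∀ y ∉ range x, pcDensity N x y < h / 2 → ∃ l r, y ∈ Ioo l r ∧
      2 * h ≤ r - l ∧ ∀ z ∈ Ioo l r, pcDensity N x z < h / 2 := by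
    have hlen : 1 / (N * (h / 2)) = 2 * h := by
      rw [div_eq_iff (by positivity)]
      linear_combination -hNh
    intro y hyx hy
    rw [← hlen]
    exact exists_Ioo_pcDensity_lt hN hx (by positivity) hyx hy
  obtain ⟨u, hu, hdisc⟩ := exists_Ioo_half_le_abs_sub (a := (2 * k + 1) * h) hh hρ
    (fun z hz => comb_eq_zero_of_mem_Ioo hs ⟨hz.1, by linarith [hz.2]⟩)
    (fun z hz => comb_eq_inv_of_mem hs (j := k) hk.le ⟨by linarith [hz.1], hz.2.le⟩)
    (fun z hz => comb_eq_inv_of_mem hs (j := k + 1) hk ⟨by push_cast; linarith [hz.1],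
      by push_cast; linarith [hz.2]⟩)
  calc 1 / (4 * N) = h / 2 * (u + h / 2 - u) := by
        rw [add_sub_cancel_left, div_eq_iff (by positivity)]
        linear_combination -hNh
    _ ≤ ∫ z in Ioo u (u + h / 2), f z :=
        mul_sub_le_setIntegral_Ioo (finite_range x).countable (by linarith) hf.integrableOn hdisc
    _ ≤ ∫ z in Ioc ((2 * k + 1 / 2) * h) ((2 * ((k + 1 : ℕ) : ℝ) + 1 / 2) * h), f z := by
        refine setIntegral_mono_set hf.integrableOn
          (Filter.Eventually.of_forall fun _ => abs_nonneg _) (LE.le.eventuallyLE fun z hz => ?_)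
        push_cast
        exact ⟨by linarith [hz.1, hu.1], by linarith [hz.2, hu.2]⟩
    _ = _ := (intervalIntegral.integral_of_le (by push_cast; linarith)).symm

theorem stmt_14_general (N C : ℕ) (hN : 0 < N)
    (βN : ℝ → ℝ)
    (hβN : βN = fun y => ∑ k ∈ Finset.range (C + 1),
      Set.indicator (Set.Icc (2 * (k : ℝ) / Real.sqrt N) ((2 * (k : ℝ) + 1) / Real.sqrt N))
        (fun _ => (Real.sqrt N)⁻¹) y) :
    ∀ x : Fin (N + 1) → ℝ, Monotone x →
      (C : ℝ) / (4 * N) ≤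
        ∫ y in Set.Icc 0 ((2 * (C : ℝ) + 1) / Real.sqrt N), |pcDensity N x y - βN y| := by
  intro x hx
  subst hβN
  set f := fun y => |pcDensity N x y - comb √N C y|
  have hf : Integrable f := ((integrable_pcDensity N x).sub integrable_comb).abs
  let w : ℕ → ℝ := fun k => (2 * k + 1 / 2) * (√N)⁻¹
  have hw : w 0 ≤ w C := by simp only [w]; gcongr; positivity
  calc (C : ℝ) / (4 * N) = ∑ _k ∈ Finset.range C, 1 / (4 * N : ℝ) := by
        rw [Finset.sum_const, Finset.card_range, nsmul_eq_mul, mul_one_div]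
    _ ≤ ∑ k ∈ Finset.range C, ∫ y in w k..w (k + 1), f y :=
        Finset.sum_le_sum fun k hk =>
          one_div_four_mul_le_integral_window hN hx (Finset.mem_range.1 hk)
    _ = ∫ y in Ioc (w 0) (w C), f y := by
        rw [intervalIntegral.sum_integral_adjacent_intervals fun k _ => hf.intervalIntegrable,
          intervalIntegral.integral_of_le hw]
    _ ≤ ∫ y in Icc 0 ((2 * (C : ℝ) + 1) / √N), f y := by
        refine setIntegral_mono_set hf.integrableOn
          (Filter.Eventually.of_forall fun _ => abs_nonneg _) (LE.le.eventuallyLE fun z hz => ?_)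
        have h0 : 0 ≤ w 0 := by positivity
        have hC : w C ≤ (2 * (C : ℝ) + 1) / √N := by
          rw [div_eq_mul_inv]
          exact mul_le_mul_of_nonneg_right (by linarith) (by positivity)
        exact ⟨h0.trans hz.1.le, hz.2.trans hC⟩

/-- Sharpness building block: the comb `β_N` of `C_N + 1` bumps of height and
width `N^{-1/2}` cannot be approximated by any `N`-particle piecewise constant
density better than `C_N/(4N)` in `L¹`. -/
theorem stmt_14 (N C : ℕ) (hN : 0 < N) (hC : 0 < C)
    (βN : ℝ → ℝ)
    (hβN : βN = fun y => ∑ k ∈ Finset.range (C + 1),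
      Set.indicator (Set.Icc (2 * (k : ℝ) / Real.sqrt N) ((2 * (k : ℝ) + 1) / Real.sqrt N))
        (fun _ => (Real.sqrt N)⁻¹) y) :
    ∀ x : Fin (N + 1) → ℝ, Monotone x →
      (C : ℝ) / (4 * N) ≤
        ∫ y in Set.Icc 0 ((2 * (C : ℝ) + 1) / Real.sqrt N), |pcDensity N x y - βN y| :=
  stmt_14_general N C hN βN hβN
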